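/- If ε₁ = α₁ + α₂ ≠ 0 and ψ is a symmetric N-linear form maximized at unit vectors α₁,…,α_N with value Λ, then ψ(β₁, β₁, α₃, …, α_N) = Λ where β₁ = (α₁+α₂)/‖α₁+α₂‖. -/

import Mathlib

/-!
At a maximizer, each slot functional `y ↦ ψ(α₁, …, y, …, α_N)` attains its norm `‖Λ‖` at the
unit vector `αᵢ`, which forces it to be `Λ ⟪αᵢ, ·⟫`: perturbing `αᵢ` orthogonally by `t x`
changes the norm only to second order in `t` but the value to first order. Expanding
`ψ(ε, ε, α₃, …)` with `ε = α₁ + α₂` in the second slot and using symmetry to move `α₁` back into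
the first slot then gives `Λ (⟪α₂, ε⟫ + ⟪α₁, ε⟫) = Λ ‖ε‖²`, and rescaling both slots by `‖ε‖⁻¹`
yields `Λ`.
-/

open Function

section

variable {𝕜 : Type*} [RCLike 𝕜] {H : Type*} [NormedAddCommGroup H] [InnerProductSpace 𝕜 H]

namespace LinearMap

theorem apply_eq_zero_of_inner_eq_zero (h : H →ₗ[𝕜] 𝕜) {α x : H} (hα : ‖α‖ = 1)
    (hbound : ∀ y, ‖h y‖ ≤ ‖h α‖ * ‖y‖) (hx : inner 𝕜 α x = 0) : h x = 0 := by
  set Λ := h α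
  set d := ‖h x‖
  rcases eq_or_ne Λ 0 with hΛ | hΛ
  · simpa [hΛ] using hbound x
  set M := ‖Λ‖ ^ 2 * d ^ 2 * ‖x‖ ^ 2
  -- Test the bound on `α + t • x` with `t = s Λ conj (h x)`, so that `h` grows by `s d²`.
  have perturb : ∀ s : ℝ, 0 < s → (1 + s * d ^ 2) ^ 2 ≤ 1 + s ^ 2 * M := by
    intro s hs
    set t : 𝕜 := s * Λ * starRingEnd 𝕜 (h x)
    have hvalue : h (α + t • x) = Λ * ((1 + s * d ^ 2 : ℝ) : 𝕜) := by
      simp only [t, map_add, map_smul, smul_eq_mul, mul_assoc, RCLike.conj_mul]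
      push_cast
      ring
    have hnorm : ‖α + t • x‖ ^ 2 = 1 + s ^ 2 * M := by
      have hperp : inner 𝕜 α (t • x) = 0 := by rw [inner_smul_right, hx, mul_zero]
      rw [sq, norm_add_sq_eq_norm_sq_add_norm_sq_of_inner_eq_zero _ _ hperp, hα, norm_smul]
      simp only [t, norm_mul, RCLike.norm_ofReal, abs_of_pos hs, RCLike.norm_conj, M, d]
      ring
    have hle : ‖Λ‖ * (1 + s * d ^ 2) ≤ ‖Λ‖ * ‖α + t • x‖ := by
      have := hbound (α + t • x)
      rwa [hvalue, norm_mul, RCLike.norm_ofReal, abs_of_pos (by positivity)] at this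
    rw [← hnorm]
    exact pow_le_pow_left₀ (by positivity) (le_of_mul_le_mul_left hle (norm_pos_iff.2 hΛ)) 2
  have hsmall : ∀ s : ℝ, 0 < s → 2 * d ^ 2 ≤ s * M := fun s hs =>
    le_of_mul_le_mul_left (by nlinarith [perturb s hs, sq_nonneg (s * d ^ 2)]) hs
  have hd : 2 * d ^ 2 ≤ 0 := by
    refine le_of_forall_pos_le_add fun δ hδ => ?_
    have hM : 0 ≤ M := by positivity
    calc 2 * d ^ 2 ≤ δ / (M + 1) * M := hsmall _ (by positivity)
      _ ≤ 0 + δ := by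
        rw [zero_add, div_mul_eq_mul_div, div_le_iff₀ (by positivity)]
        nlinarith
  exact norm_le_zero_iff.1 (by nlinarith [norm_nonneg (h x)])

theorem apply_eq_mul_inner_of_norm_le (h : H →ₗ[𝕜] 𝕜) {α : H} (hα : ‖α‖ = 1)
    (hbound : ∀ y, ‖h y‖ ≤ ‖h α‖ * ‖y‖) (x : H) : h x = h α * inner 𝕜 α x := by
  have hperp : inner 𝕜 α (x - inner 𝕜 α x • α) = 0 := by
    rw [inner_sub_right, inner_smul_right, inner_self_eq_norm_sq_to_K, hα]
    simp
  have hx : x = inner 𝕜 α x • α + (x - inner 𝕜 α x • α) := by abel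
  rw [hx, map_add, map_smul, h.apply_eq_zero_of_inner_eq_zero hα hbound hperp, hx.symm,
    smul_eq_mul, add_zero, mul_comm]

end LinearMap

namespace MultilinearMap

variable {ι : Type*} [DecidableEq ι] {ψ : MultilinearMap 𝕜 (fun _ : ι => H) 𝕜} {α : ι → H}

theorem map_update_eq_mul_inner_of_isMax (hα : ∀ i, ‖α i‖ = 1)
    (hmax : ∀ u : ι → H, (∀ i, ‖u i‖ = 1) → ‖ψ u‖ ≤ ‖ψ α‖) (i : ι) (y : H) :
    ψ (update α i y) = ψ α * inner 𝕜 (α i) y := by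
  have hsphere : ∀ z ∈ Metric.sphere (0 : H) 1, ‖ψ.toLinearMap α i z‖ ≤ ‖ψ α‖ := by
    intro z hz
    refine hmax _ fun j => ?_
    rcases eq_or_ne j i with rfl | hj
    · simpa using hz
    · rw [update_of_ne hj, hα j]
  have hbound (z : H) : ‖ψ.toLinearMap α i z‖ ≤ ‖ψ.toLinearMap α i (α i)‖ * ‖z‖ := by
    simpa using (ψ.toLinearMap α i).bound_of_sphere_bound one_pos _ hsphere z
  simpa using (ψ.toLinearMap α i).apply_eq_mul_inner_of_norm_le (hα i) hbound y

theorem map_update_update_add_eq_mul_norm_sq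
    (hsymm : ∀ (σ : Equiv.Perm ι) (v : ι → H), ψ (v ∘ σ) = ψ v)
    (hα : ∀ i, ‖α i‖ = 1) (hmax : ∀ u : ι → H, (∀ i, ‖u i‖ = 1) → ‖ψ u‖ ≤ ‖ψ α‖)
    {i j : ι} (hij : i ≠ j) :
    ψ (update (update α i (α i + α j)) j (α i + α j)) =
      ψ α * ((‖α i + α j‖ ^ 2 : ℝ) : 𝕜) := by
  set ε := α i + α j
  have hswap : ψ (update (update α i ε) j (α i)) = ψ (update α j ε) := by
    rw [← hsymm (Equiv.swap i j)]
    congr 1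
    funext k
    simp only [comp_apply, update_apply, Equiv.swap_apply_def]
    split_ifs <;> simp_all
  calc ψ (update (update α i ε) j ε)
      = ψ (update (update α i ε) j (α i)) + ψ (update (update α i ε) j (α j)) :=
        ψ.map_update_add _ _ _ _
    _ = ψ (update α j ε) + ψ (update α i ε) := by
        rw [hswap, update_comm hij, update_eq_self]
    _ = ψ α * inner 𝕜 ε ε := by
        rw [map_update_eq_mul_inner_of_isMax hα hmax, map_update_eq_mul_inner_of_isMax hα hmax,
          ← mul_add, ← inner_add_left, add_comm]
    _ = ψ α * ((‖ε‖ ^ 2 : ℝ) : 𝕜) := by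
        rw [inner_self_eq_norm_sq_to_K]
        norm_cast

end MultilinearMap

end

/-- If ψ is a symmetric N-linear form maximized at unit vectors α₁,…,α_N with
value Λ and α₁ + α₂ ≠ 0, then ψ(β₁, β₁, α₃, …, α_N) = Λ where
β₁ = (α₁+α₂)/‖α₁+α₂‖. -/
theorem stmt_9 {𝕜 : Type*} [RCLike 𝕜] {H : Type*} [NormedAddCommGroup H]
    [InnerProductSpace 𝕜 H]
    (N : ℕ) (hN : 2 ≤ N)
    (ψ : MultilinearMap 𝕜 (fun _ : Fin N => H) 𝕜)
    (hsymm : ∀ (σ : Equiv.Perm (Fin N)) (v : Fin N → H), ψ (v ∘ σ) = ψ v)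
    (α : Fin N → H)
    (hα : ∀ i, ‖α i‖ = 1)
    (hmax : ∀ u : Fin N → H, (∀ i, ‖u i‖ = 1) → ‖ψ u‖ ≤ ‖ψ α‖)
    (Λ : 𝕜) (hΛ : ψ α = Λ)
    (hne : α ⟨0, by omega⟩ + α ⟨1, by omega⟩ ≠ 0) :
    ψ (fun i => if (i : ℕ) < 2 then
        ((‖α ⟨0, by omega⟩ + α ⟨1, by omega⟩‖⁻¹ : ℝ) : 𝕜) •
          (α ⟨0, by omega⟩ + α ⟨1, by omega⟩)
      else α i) = Λ := by
  set i₀ : Fin N := ⟨0, by omega⟩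
  set i₁ : Fin N := ⟨1, by omega⟩
  have hi : i₀ ≠ i₁ := by simp [i₀, i₁, Fin.ext_iff]
  set ε := α i₀ + α i₁
  set c : 𝕜 := ((‖ε‖⁻¹ : ℝ) : 𝕜)
  have htarget : (fun k : Fin N => if (k : ℕ) < 2 then c • ε else α k) =
      update (update α i₀ (c • ε)) i₁ (c • ε) := by
    funext k
    simp only [update_apply, i₀, i₁, Fin.ext_iff]
    split_ifs <;> first | rfl | omega
  have hc : c * c * ((‖ε‖ ^ 2 : ℝ) : 𝕜) = 1 := by
    have : ‖ε‖ ≠ 0 := norm_ne_zero_iff.2 hne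
    rw [← RCLike.ofReal_mul, ← RCLike.ofReal_mul,
      show ‖ε‖⁻¹ * ‖ε‖⁻¹ * ‖ε‖ ^ 2 = 1 by field_simp, RCLike.ofReal_one]
  rw [htarget, ψ.map_update_smul, update_comm hi, ψ.map_update_smul, update_comm hi.symm,
    ψ.map_update_update_add_eq_mul_norm_sq hsymm hα hmax hi, hΛ, smul_eq_mul, smul_eq_mul]
  linear_combination Λ * hc
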